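/- arXiv:2102.08605 — 2 statements merged into one kernel-verified Lean document; each statement's English description precedes it below -/
import Mathlib

section
/- For every integer s ≥ 2, the special linear group SL(2, q) over the finite field with q = 2^s elements has no 3-fold factorization of the form (2, 2^{s-2}(2^{2s} − 1), 2). -/
/-!
Suppose `G = {a₁, a₂} * B * {c₁, c₂}` with `|G| = 4 |B|`, so that the four sets `aᵢ B cⱼ`
partition `G`. Left multiplication by `a = a₂ a₁⁻¹` exchanges the halves `a₁ B C` and `a₂ B C`,
so `a` has even order; inverting the factorization, the same holds for `c = c₂⁻¹ c₁`. In
`SL(2, 2^s)` the centralizer of an involution has exponent 2, so `a` and `c` are involutions, and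
all involutions are conjugate, so `a w c = w` for some `w`. But `g ↦ a g c` still exchanges the
two halves, because `C c = C`, so it has no fixed point.
-/

open Pointwise

/-- A finite group `G` has a `k`-fold factorization of the form `(a 0, …, a (k-1))`:
there are subsets `A 0, …, A (k-1)` of `G` with `|A i| = a i`, `|G| = a 0 ⋯ a (k-1)`,
and the setwise product `A 0 ⋯ A (k-1)` equals `G`. -/
def HasFactorization (G : Type*) [Group G] {k : ℕ} (a : Fin k → ℕ) : Prop :=
  ∃ A : Fin k → Set G,
    (∀ i, Nat.card (A i) = a i) ∧
    Nat.card G = ∏ i, a i ∧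
    (List.ofFn A).prod = (Set.univ : Set G)

section Factorization

open Set

theorem even_orderOf_of_smul_eq_compl {G α : Type*} [Group G] [MulAction G α] [Nonempty α]
    {a : G} {E : Set α} (h : a • E = Eᶜ) : Even (orderOf a) := by
  have hsq : a ^ 2 ∈ MulAction.stabilizer G E := by
    rw [MulAction.mem_stabilizer_iff, pow_two, mul_smul, h, smul_set_compl, h, compl_compl]
  by_contra hodd
  obtain ⟨k, hk⟩ := Nat.not_even_iff_odd.mp hodd
  have ha : a = (a ^ 2) ^ (k + 1) := by
    rw [← pow_mul, show 2 * (k + 1) = orderOf a + 1 by omega, pow_succ, pow_orderOf_eq_one,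
      one_mul]
  have : a • E = E := by
    rw [ha]
    exact MulAction.mem_stabilizer_iff.mp ((MulAction.stabilizer G E).pow_mem hsq _)
  exact compl_ne_self (h.symm.trans this)

variable {G : Type*} [Group G]

theorem smul_set_eq_compl_of_pair_mul_eq_univ [Finite G] {a₁ a₂ : G} {X : Set G}
    (h : {a₁, a₂} * X = univ) (hX : 2 * Nat.card X ≤ Nat.card G) : a₂ • X = (a₁ • X)ᶜ := by
  have hU : a₁ • X ∪ a₂ • X = univ := by
    rw [← h, insert_eq, union_mul, ← smul_eq_mul, ← smul_eq_mul, singleton_smul, singleton_smul]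
  have hD : Disjoint (a₁ • X) (a₂ • X) := by
    refine (ncard_union_eq_iff).mp (le_antisymm (ncard_union_le _ _) ?_)
    rw [hU, ncard_univ, ncard_smul_set, ncard_smul_set, ← two_mul, ← Nat.card_coe_set_eq]
    exact hX
  exact (IsCompl.of_eq hD.eq_bot (by simpa using hU)).compl_eq.symm

theorem even_orderOf_of_pair_mul_eq_univ [Finite G] {a₁ a₂ : G} {X : Set G}
    (h : {a₁, a₂} * X = univ) (hX : 2 * Nat.card X ≤ Nat.card G) :
    Even (orderOf (a₂ * a₁⁻¹)) := by
  refine even_orderOf_of_smul_eq_compl (E := a₁ • X) ?_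
  rw [smul_smul, inv_mul_cancel_right]
  exact smul_set_eq_compl_of_pair_mul_eq_univ h hX

theorem sq_eq_one_of_even_orderOf [Finite G]
    (hcent : ∀ x y : G, y ^ 2 = 1 → y ≠ 1 → Commute x y → x ^ 2 = 1) {g : G}
    (hg : Even (orderOf g)) : g ^ 2 = 1 := by
  obtain ⟨m, hm⟩ := hg
  have hm0 : 0 < m := by have := orderOf_pos g; omega
  refine hcent g (g ^ m) ?_ ?_ (Commute.self_pow g m)
  · rw [← pow_mul, mul_comm, two_mul, ← hm, pow_orderOf_eq_one]
  · exact pow_ne_one_of_lt_orderOf hm0.ne' (by omega)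

theorem mul_inv_mul_mul_ne_self_of_pair_mul_eq_univ [Finite G] {a₁ a₂ c : G} {B C : Set G}
    (h : {a₁, a₂} * (B * C) = univ) (hBC : 2 * Nat.card ↥(B * C) ≤ Nat.card G)
    (hC : ∀ y, y * c ∈ C ↔ y ∈ C) (w : G) : a₂ * a₁⁻¹ * w * c ≠ w := by
  set E := a₁ • (B * C)
  have hflip : (a₂ * a₁⁻¹) • E = Eᶜ := by
    rw [smul_smul, inv_mul_cancel_right]
    exact smul_set_eq_compl_of_pair_mul_eq_univ h hBC
  have hBC_mul (x : G) : x * c ∈ B * C ↔ x ∈ B * C := by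
    constructor
    · rintro ⟨b, hb, y, hy, hxy⟩
      refine ⟨b, hb, y * c⁻¹, (hC _).mp (by rwa [inv_mul_cancel_right]), ?_⟩
      change b * (y * c⁻¹) = x
      rw [← mul_assoc, show b * y = x * c from hxy, mul_inv_cancel_right]
    · rintro ⟨b, hb, y, hy, rfl⟩
      exact ⟨b, hb, y * c, (hC y).mpr hy, (mul_assoc b y c).symm⟩
  have hE_mul (g : G) : g * c ∈ E ↔ g ∈ E := by
    rw [mem_smul_set_iff_inv_smul_mem, mem_smul_set_iff_inv_smul_mem, smul_eq_mul, smul_eq_mul,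
      ← mul_assoc, hBC_mul]
  intro hw
  have h₁ : a₂ * a₁⁻¹ * w ∈ E ↔ w ∈ E := by rw [← hE_mul, hw]
  have h₂ : (a₂ * a₁⁻¹) • w ∈ Eᶜ ↔ w ∈ E := by rw [← hflip, smul_mem_smul_set_iff]
  rw [smul_eq_mul, mem_compl_iff] at h₂
  tauto

theorem mul_mul_ne_univ_of_card_eq_two [Finite G]
    (hcent : ∀ x y : G, y ^ 2 = 1 → y ≠ 1 → Commute x y → x ^ 2 = 1)
    (hconj : ∀ x y : G, x ^ 2 = 1 → x ≠ 1 → y ^ 2 = 1 → y ≠ 1 → IsConj x y)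
    {A B C : Set G} (hA : Nat.card A = 2) (hC : Nat.card C = 2)
    (hG : Nat.card G = 2 * Nat.card B * 2) : A * (B * C) ≠ univ := by
  intro hABC
  have hBC : 2 * Nat.card ↥(B * C) ≤ Nat.card G := by
    grw [natCard_mul_le, hC, hG]
    linarith
  have hAB : 2 * Nat.card ↥(A * B)⁻¹ ≤ Nat.card G := by
    grw [natCard_inv, natCard_mul_le, hA, hG]
    linarith
  rw [Nat.card_coe_set_eq] at hA hC
  obtain ⟨a₁, a₂, ha, rfl⟩ := ncard_eq_two.mp hA
  obtain ⟨c₁, c₂, hc, rfl⟩ := ncard_eq_two.mp hC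
  set a := a₂ * a₁⁻¹
  set c := c₂⁻¹ * c₁
  have haa : a ^ 2 = 1 :=
    sq_eq_one_of_even_orderOf hcent (even_orderOf_of_pair_mul_eq_univ hABC hBC)
  have hcc : c ^ 2 = 1 := by
    -- inverting the factorization brings `{c₁, c₂}` to the left
    have hinv : {c₁⁻¹, c₂⁻¹} * ({a₁, a₂} * B)⁻¹ = univ := by
      rw [← inv_singleton c₂, ← inv_insert, ← mul_inv_rev, mul_assoc, hABC, inv_univ]
    have := even_orderOf_of_pair_mul_eq_univ hinv hAB
    rw [inv_inv] at this
    exact sq_eq_one_of_even_orderOf hcent this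
  have hc_swap : c₁ * c = c₂ ∧ c₂ * c = c₁ := by
    refine ⟨?_, mul_inv_cancel_left c₂ c₁⟩
    calc c₁ * c = c₂ * (c * c) := by simp only [c]; group
      _ = c₂ := by rw [← pow_two, hcc, mul_one]
  have hC_mul (y : G) : y * c ∈ ({c₁, c₂} : Set G) ↔ y ∈ ({c₁, c₂} : Set G) := by
    have e₁ : y * c = c₁ ↔ y = c₂ := by rw [← hc_swap.2, mul_left_inj]
    have e₂ : y * c = c₂ ↔ y = c₁ := by rw [← hc_swap.1, mul_left_inj]
    simp only [mem_insert_iff, mem_singleton_iff, e₁, e₂, or_comm]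
  obtain ⟨g, hg⟩ := isConj_iff.mp (hconj c a hcc (by simpa [c, inv_mul_eq_one] using hc.symm)
    haa (by simpa [a, mul_inv_eq_one] using ha.symm))
  refine mul_inv_mul_mul_ne_self_of_pair_mul_eq_univ hABC hBC hC_mul g ?_
  change a * g * c = g
  rw [← hg, inv_mul_cancel_right, mul_assoc, ← pow_two, hcc, mul_one]

end Factorization

namespace Matrix.SpecialLinearGroup

open scoped MatrixGroups

section CharTwo

variable {R : Type*} [CommRing R] [CharP R 2]

theorem SL2_coe_sq_eq_trace_smul_add_one (x : SL(2, R)) :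
    (x : Matrix (Fin 2) (Fin 2) R) ^ 2 = trace (x : Matrix (Fin 2) (Fin 2) R) • x + 1 := by
  have hdet : x 0 0 * x 1 1 - x 0 1 * x 1 0 = 1 := by rw [← det_fin_two, det_coe]
  ext i j
  fin_cases i <;> fin_cases j <;> simp [pow_two, mul_apply, Fin.sum_univ_two, trace_fin_two]
  · linear_combination -hdet - CharTwo.two_eq_zero (R := R)
  · ring
  · ring
  · linear_combination -hdet - CharTwo.two_eq_zero (R := R)

theorem SL2_sq_eq_one_iff_trace_eq_zero (x : SL(2, R)) :
    x ^ 2 = 1 ↔ trace (x : Matrix (Fin 2) (Fin 2) R) = 0 := by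
  refine Subtype.ext_iff.trans ?_
  rw [coe_pow, coe_one, SL2_coe_sq_eq_trace_smul_add_one, add_eq_right]
  refine ⟨fun h => ?_, fun h => by rw [h, zero_smul]⟩
  have hdet : x 0 0 * x 1 1 - x 0 1 * x 1 0 = 1 := by rw [← det_fin_two, det_coe]
  have h00 := congrFun (congrFun h 0) 0
  have h01 := congrFun (congrFun h 0) 1
  simp only [smul_apply, smul_eq_mul, zero_apply] at h00 h01
  linear_combination -(trace (x : Matrix (Fin 2) (Fin 2) R)) * hdet + x 1 1 * h00 - x 1 0 * h01

end CharTwo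

section CharTwoField

variable {F : Type*} [Field F] [CharP F 2]

theorem SL2_sq_eq_one_of_commute {x y : SL(2, F)} (hy : y ^ 2 = 1) (hy1 : y ≠ 1)
    (hxy : Commute x y) : x ^ 2 = 1 := by
  rw [SL2_sq_eq_one_iff_trace_eq_zero, trace_fin_two] at hy ⊢
  have hyd : y 0 0 = y 1 1 := CharTwo.add_eq_zero.mp hy
  have hoff : y 0 1 ≠ 0 ∨ y 1 0 ≠ 0 := by
    by_contra! h
    have hdet : y 0 0 * y 1 1 - y 0 1 * y 1 0 = 1 := by rw [← det_fin_two, det_coe]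
    have hy00 : y 0 0 = 1 :=
      CharTwo.sq_inj.mp (by linear_combination hdet + y 0 0 * hyd + y 0 1 * h.2)
    refine hy1 (ext _ _ fun i j => ?_)
    fin_cases i <;> fin_cases j <;> simp [hy00, ← hyd, h.1, h.2]
  have hc01 := congrArg (fun g : SL(2, F) => g 0 1) hxy.eq
  have hc10 := congrArg (fun g : SL(2, F) => g 1 0) hxy.eq
  simp only [coe_mul, mul_apply, Fin.sum_univ_two] at hc01 hc10
  have hx : x 0 0 = x 1 1 := by
    rcases hoff with hq | hr
    · refine mul_left_cancel₀ hq ?_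
      linear_combination hc01 + x 0 1 * hyd
    · refine mul_left_cancel₀ hr ?_
      linear_combination -hc10 + x 1 0 * hyd
  rw [hx, CharTwo.add_self_eq_zero]

variable [PerfectRing F 2]

theorem SL2_exists_det_eq_one_mul_eq_of_sq_eq_one {x : SL(2, F)} (hx : x ^ 2 = 1) (hx1 : x ≠ 1) :
    ∃ g : Matrix (Fin 2) (Fin 2) F, g.det = 1 ∧
      g * !![1, 1; 0, 1] = (x : Matrix (Fin 2) (Fin 2) F) * g := by
  rw [SL2_sq_eq_one_iff_trace_eq_zero, trace_fin_two] at hx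
  have hd : x 0 0 = x 1 1 := CharTwo.add_eq_zero.mp hx
  have hdet : x 0 0 * x 0 0 - x 0 1 * x 1 0 = 1 := by nth_rw 2 [hd]; rw [← det_fin_two, det_coe]
  have h2 : (2 : F) = 0 := CharTwo.two_eq_zero
  have hsqrt (t : F) : ∃ μ, μ ^ 2 = t := surjective_frobenius F 2 t
  rw [eta_fin_two (x : Matrix (Fin 2) (Fin 2) F)]
  -- `g` has columns `μ (x - 1) v` and `μ v`, for a basis vector `v` with `(x - 1) v ≠ 0`
  -- and `μ` chosen so that `det g = 1`
  by_cases hb : x 0 1 = 0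
  · have ha : x 0 0 = 1 := CharTwo.sq_inj.mp (by linear_combination hdet + x 1 0 * hb)
    have hc : x 1 0 ≠ 0 := fun hc => hx1 (ext _ _ fun i j => by
      fin_cases i <;> fin_cases j <;> simp [ha, ← hd, hb, hc])
    obtain ⟨μ, hμ⟩ := hsqrt (x 1 0)⁻¹
    have hμc : μ ^ 2 * x 1 0 = 1 := by rw [hμ, inv_mul_cancel₀ hc]
    refine ⟨!![0, μ; μ * x 1 0, 0], ?_, ?_⟩
    · rw [det_fin_two_of]
      linear_combination -hμc - h2
    · ext i j
      fin_cases i <;> fin_cases j <;> simp [mul_apply, Fin.sum_univ_two, ha, hb, ← hd, mul_comm]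
  · obtain ⟨μ, hμ⟩ := hsqrt (x 0 1)⁻¹
    have hμb : μ ^ 2 * x 0 1 = 1 := by rw [hμ, inv_mul_cancel₀ hb]
    refine ⟨!![μ * x 0 1, 0; μ * (x 0 0 + 1), μ], ?_, ?_⟩
    · rw [det_fin_two_of]
      linear_combination hμb
    · ext i j
      fin_cases i <;> fin_cases j <;> simp [mul_apply, Fin.sum_univ_two, ← hd]
      · linear_combination -(x 0 0 * μ * x 0 1) * h2
      · ring
      · linear_combination -μ * hdet - μ * x 0 1 * x 1 0 * h2
      · linear_combination μ * h2

theorem SL2_isConj_transvection_of_sq_eq_one {x : SL(2, F)} (hx : x ^ 2 = 1) (hx1 : x ≠ 1) :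
    IsConj (transvection zero_ne_one 1) x := by
  obtain ⟨g, hg, hgx⟩ := SL2_exists_det_eq_one_mul_eq_of_sq_eq_one hx hx1
  refine isConj_iff.mpr ⟨⟨g, hg⟩, mul_inv_eq_of_eq_mul (Subtype.ext ?_)⟩
  have hu : (1 + single 0 1 1 : Matrix (Fin 2) (Fin 2) F) = !![1, 1; 0, 1] := by
    ext i j
    fin_cases i <;> fin_cases j <;> simp
  change g * (1 + single 0 1 1) = (x : Matrix (Fin 2) (Fin 2) F) * g
  rwa [hu]

end CharTwoField

end Matrix.SpecialLinearGroup

theorem SL2_no_factorization_general (s : ℕ)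
    (F : Type*) [Field F] [Fintype F] (hF : Fintype.card F = 2 ^ s) :
    ¬ HasFactorization (Matrix.SpecialLinearGroup (Fin 2) F)
      ![2, 2 ^ (s - 2) * (2 ^ (2 * s) - 1), 2] := by
  have : CharP F 2 := charP_of_card_eq_prime_pow hF
  have hconj {x y : Matrix.SpecialLinearGroup (Fin 2) F} (hx : x ^ 2 = 1) (hx1 : x ≠ 1)
      (hy : y ^ 2 = 1) (hy1 : y ≠ 1) : IsConj x y :=
    (Matrix.SpecialLinearGroup.SL2_isConj_transvection_of_sq_eq_one hx hx1).symm.trans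
      (Matrix.SpecialLinearGroup.SL2_isConj_transvection_of_sq_eq_one hy hy1)
  rintro ⟨A, hcard, hG, hprod⟩
  refine mul_mul_ne_univ_of_card_eq_two
    (fun _ _ => Matrix.SpecialLinearGroup.SL2_sq_eq_one_of_commute) (fun _ _ => hconj)
    (hcard 0) (hcard 2) ?_ (by simpa [List.ofFn_succ] using hprod)
  rw [hG, hcard 1, Fin.prod_univ_three]
  rfl

/-- For every integer `s ≥ 2`, the special linear group `SL(2, q)` over the finite
field with `q = 2 ^ s` elements has no `3`-fold factorization of the form
`(2, 2^(s-2) * (2^(2s) - 1), 2)`. -/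
theorem SL2_no_factorization (s : ℕ) (hs : 2 ≤ s)
    (F : Type*) [Field F] [Fintype F] (hF : Fintype.card F = 2 ^ s) :
    ¬ HasFactorization (Matrix.SpecialLinearGroup (Fin 2) F)
      ![2, 2 ^ (s - 2) * (2 ^ (2 * s) - 1), 2] :=
  SL2_no_factorization_general s F hF
end

section
/- Let p be an odd prime and n ≥ 1 an integer, and let G be a group of order 4·p^n whose Sylow p-subgroup is normal and whose Sylow 2-subgroup is elementary abelian. Then G is supersolvable. -/
open Pointwise

/-- A group is supersolvable if it possesses a finite normal series
`⊥ = s 0 ≤ s 1 ≤ … ≤ s n = ⊤` with all terms normal in the whole group and all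
successive factor groups cyclic (equivalently, each `s (i+1)` is generated by
`s i` together with a single element). -/
def IsSupersolvable (G : Type*) [Group G] : Prop :=
  ∃ (n : ℕ) (s : Fin (n + 1) → Subgroup G),
    s 0 = ⊥ ∧ s (Fin.last n) = ⊤ ∧
    (∀ i, (s i).Normal) ∧
    (∀ i : Fin n, s i.castSucc ≤ s i.succ) ∧
    (∀ i : Fin n, ∃ x : G, s i.succ = s i.castSucc ⊔ Subgroup.closure {x})

lemma isSupersolvable_of_subsingleton (G : Type*) [Group G] [Subsingleton G] :
    IsSupersolvable G := by
  refine ⟨0, fun _ => ⊥, rfl, ?_, fun _ => inferInstance, fun i => i.elim0, fun i => i.elim0⟩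
  ext x
  simp [Subsingleton.elim x 1]

lemma isSupersolvable_of_quotient {G : Type*} [Group G] (N : Subgroup G) [N.Normal] (x : G)
    (hx : Subgroup.closure {x} = N) (h : IsSupersolvable (G ⧸ N)) : IsSupersolvable G := by
  classical
  obtain ⟨m, t, ht0, htl, htn, htle, htgen⟩ := h
  set f := QuotientGroup.mk' N with hf
  have hsurj : Function.Surjective f := QuotientGroup.mk'_surjective N
  have hker : f.ker = N := QuotientGroup.ker_mk' N
  refine ⟨m + 1, Fin.cons ⊥ (fun i => (t i).comap f), Fin.cons_zero _ _, ?_, ?_, ?_, ?_⟩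
  · rw [← Fin.succ_last, Fin.cons_succ, htl, Subgroup.comap_top]
  · intro i
    induction i using Fin.cases with
    | zero =>
      rw [Fin.cons_zero]
      exact ⟨fun a ha g => by simp_all⟩
    | succ j =>
      rw [Fin.cons_succ]
      haveI := htn j
      exact Subgroup.normal_comap f
  · intro i
    induction i using Fin.cases with
    | zero => simp
    | succ j =>
      have e1 : (Fin.cons ⊥ (fun i => (t i).comap f) : Fin (m + 2) → Subgroup G) j.succ.castSucc
          = (t j.castSucc).comap f := by
        have e : j.succ.castSucc = j.castSucc.succ := rfl
        rw [e, Fin.cons_succ]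
      rw [e1, Fin.cons_succ]
      exact Subgroup.comap_mono (htle j)
  · intro i
    induction i using Fin.cases with
    | zero =>
      refine ⟨x, ?_⟩
      rw [Fin.castSucc_zero, Fin.cons_zero, Fin.cons_succ, ht0, MonoidHom.comap_bot, hker, hx,
        bot_sup_eq]
    | succ j =>
      obtain ⟨y, hy⟩ := htgen j
      obtain ⟨x₀, hx₀⟩ := hsurj y
      refine ⟨x₀, ?_⟩
      have e1 : (Fin.cons ⊥ (fun i => (t i).comap f) : Fin (m + 2) → Subgroup G) j.succ.castSucc
          = (t j.castSucc).comap f := by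
        have e : j.succ.castSucc = j.castSucc.succ := rfl
        rw [e, Fin.cons_succ]
      rw [e1, Fin.cons_succ]
      have hkle : f.ker ≤ (t j.castSucc).comap f := by
        rw [← MonoidHom.comap_bot f]; exact Subgroup.comap_mono bot_le
      have hmap : Subgroup.map f ((t j.castSucc).comap f ⊔ Subgroup.closure {x₀})
          = t j.succ := by
        rw [Subgroup.map_sup, Subgroup.map_comap_eq_self_of_surjective hsurj,
          MonoidHom.map_closure, Set.image_singleton, hx₀, hy]
      rw [← hmap, Subgroup.comap_map_eq, sup_of_le_left (le_trans hkle le_sup_left)]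

lemma isSupersolvable_of_comm' : ∀ (k : ℕ) (G : Type u) [Group G] [Finite G],
    Nat.card G ≤ k → (∀ x y : G, x * y = y * x) → IsSupersolvable G := by
  intro k
  induction k with
  | zero =>
    intro G _ _ h _
    exact absurd h (by simp [Nat.card_pos.ne'] )
  | succ k ih =>
    intro G _ _ hcard hcomm
    by_cases htriv : ∀ x : G, x = 1
    · have : Subsingleton G := ⟨fun a b => (htriv a).trans (htriv b).symm⟩
      exact isSupersolvable_of_subsingleton G
    · push_neg at htriv
      obtain ⟨x, hx⟩ := htriv
      set N := Subgroup.closure ({x} : Set G) with hN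
      have : N.Normal := ⟨fun n hn g => by
        rw [hcomm g n, mul_assoc, mul_inv_cancel, mul_one]; exact hn⟩
      refine isSupersolvable_of_quotient N x rfl (ih _ ?_ ?_)
      · have h1 : Nat.card G = Nat.card (G ⧸ N) * Nat.card N := by
          exact Subgroup.card_eq_card_quotient_mul_card_subgroup N
        have h2 : 2 ≤ Nat.card N := by
          have : Nontrivial N :=
            ⟨⟨⟨x, Subgroup.subset_closure rfl⟩, 1, by simpa using hx⟩⟩
          exact Finite.one_lt_card
        have h3 : 1 ≤ Nat.card (G ⧸ N) := Nat.card_pos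
        have h4 : Nat.card (G ⧸ N) * 2 ≤ Nat.card (G ⧸ N) * Nat.card N :=
          Nat.mul_le_mul_left _ h2
        omega
      · intro a b
        induction a using QuotientGroup.induction_on with
        | H a =>
        induction b using QuotientGroup.induction_on with
        | H b =>
        rw [← QuotientGroup.mk_mul, ← QuotientGroup.mk_mul, hcomm]


lemma fact_aux {p : ℕ} (hp : p.Prime) (hodd : Odd p) (m : ℕ) :
    (4 * p ^ m).factorization p = m := by
  have hp2 : p ≠ 2 := by rintro rfl; exact (by decide : ¬ Odd 2) hodd
  rw [Nat.factorization_mul (by norm_num) (pow_ne_zero _ hp.pos.ne')]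
  have h4 : (4 : ℕ) = 2 ^ 2 := by norm_num
  rw [h4, Nat.Prime.factorization_pow Nat.prime_two, Nat.Prime.factorization_pow hp]
  simp [Finsupp.single_apply, hp2, Ne.symm hp2]

lemma fact_aux2 {p : ℕ} (hp : p.Prime) (hodd : Odd p) (m : ℕ) :
    (4 * p ^ m).factorization 2 = 2 := by
  have hp2 : p ≠ 2 := by rintro rfl; exact (by decide : ¬ Odd 2) hodd
  rw [Nat.factorization_mul (by norm_num) (pow_ne_zero _ hp.pos.ne')]
  have h4 : (4 : ℕ) = 2 ^ 2 := by norm_num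
  rw [h4, Nat.Prime.factorization_pow Nat.prime_two, Nat.Prime.factorization_pow hp]
  simp [Finsupp.single_apply, hp2]

universe u

lemma main_aux (p : ℕ) (hp : p.Prime) (hodd : Odd p) :
    ∀ (n : ℕ) (G : Type u) (_ : Group G) (_ : Finite G), Nat.card G = 4 * p ^ n →
      (∀ P : Sylow p G, (P : Subgroup G).Normal) →
      (∀ Q : Sylow 2 G, (∀ x y : (Q : Subgroup G), x * y = y * x) ∧
        ∀ x : (Q : Subgroup G), x ^ 2 = 1) →
      IsSupersolvable G := by
  haveI : Fact p.Prime := ⟨hp⟩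
  haveI : Fact (Nat.Prime 2) := ⟨Nat.prime_two⟩
  intro n
  induction n with
  | zero =>
    intro G _ _ hG hP hQ
    rw [pow_zero, mul_one] at hG
    set Q : Sylow 2 G := default with hQdef
    have hcardQ : Nat.card (Q : Subgroup G) = 4 := by
      rw [Q.card_eq_multiplicity, hG]
      have h4 : (4 : ℕ) = 2 ^ 2 := by norm_num
      rw [h4, Nat.Prime.factorization_pow Nat.prime_two]
      simp
    have hQtop : (Q : Subgroup G) = ⊤ := by
      apply Subgroup.eq_top_of_card_eq
      rw [hcardQ, hG]
    have hcomm : ∀ x y : G, x * y = y * x := by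
      intro x y
      have hx : x ∈ (Q : Subgroup G) := by rw [hQtop]; trivial
      have hy : y ∈ (Q : Subgroup G) := by rw [hQtop]; trivial
      have := (hQ Q).1 ⟨x, hx⟩ ⟨y, hy⟩
      exact congrArg Subtype.val this
    exact isSupersolvable_of_comm' (Nat.card G) G le_rfl hcomm
  | succ n ih =>
    intro G _ _ hG hP hQ
    -- setup
    set P : Sylow p G := default with hPdef
    haveI hPn : (P : Subgroup G).Normal := hP P
    set Q : Sylow 2 G := default with hQdef
    have hcardP : Nat.card (P : Subgroup G) = p ^ (n + 1) := by
      rw [P.card_eq_multiplicity, hG, fact_aux hp hodd]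
    have hcardQ : Nat.card (Q : Subgroup G) = 4 := by
      rw [Q.card_eq_multiplicity, hG, fact_aux2 hp hodd]
      norm_num
    have hQsq : ∀ g ∈ (Q : Subgroup G), g * g = 1 := by
      intro g hg
      have := (hQ Q).2 ⟨g, hg⟩
      have h2 := congrArg Subtype.val this
      simpa [pow_two] using h2
    have hQcomm : ∀ g ∈ (Q : Subgroup G), ∀ h ∈ (Q : Subgroup G), g * h = h * g := by
      intro g hg h hh
      exact congrArg Subtype.val ((hQ Q).1 ⟨g, hg⟩ ⟨h, hh⟩)
    -- the subgroup V = Ω₁(Z(P))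
    set V : Subgroup G :=
      { carrier := {g | g ∈ (P : Subgroup G) ∧ g ^ p = 1 ∧
          ∀ h ∈ (P : Subgroup G), g * h = h * g}
        one_mem' := ⟨one_mem _, one_pow p, fun h _ => by rw [one_mul, mul_one]⟩
        mul_mem' := by
          rintro x y ⟨hxP, hxp, hxc⟩ ⟨hyP, hyp, hyc⟩
          refine ⟨mul_mem hxP hyP, ?_, ?_⟩
          · have hcxy : Commute x y := hxc y hyP
            rw [hcxy.mul_pow, hxp, hyp, one_mul]
          · intro h hh
            rw [mul_assoc, hyc h hh, ← mul_assoc, hxc h hh, mul_assoc]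
        inv_mem' := by
          rintro x ⟨hxP, hxp, hxc⟩
          refine ⟨inv_mem hxP, by rw [inv_pow, hxp, inv_one], ?_⟩
          intro h hh
          exact (Commute.inv_left (hxc h hh)).eq } with hVdef
    have hVmem : ∀ {g : G}, g ∈ V ↔ g ∈ (P : Subgroup G) ∧ g ^ p = 1 ∧
        ∀ h ∈ (P : Subgroup G), g * h = h * g := Iff.rfl
    have hVconj : ∀ (g : G), ∀ x ∈ V, g * x * g⁻¹ ∈ V := by
      intro g x hx
      obtain ⟨hxP, hxp, hxc⟩ := hVmem.mp hx
      refine hVmem.mpr ⟨hPn.conj_mem x hxP g, ?_, ?_⟩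
      · rw [conj_pow, hxp, mul_one, mul_inv_cancel]
      · intro h hh
        have hh' : g⁻¹ * h * g ∈ (P : Subgroup G) := by
          have := hPn.conj_mem h hh g⁻¹
          simpa using this
        have hx' := hxc _ hh'
        have : g * (x * (g⁻¹ * h * g)) * g⁻¹ = g * ((g⁻¹ * h * g) * x) * g⁻¹ := by
          rw [hx']
        calc g * x * g⁻¹ * h = g * (x * (g⁻¹ * h * g)) * g⁻¹ := by group
        _ = g * ((g⁻¹ * h * g) * x) * g⁻¹ := this
        _ = h * (g * x * g⁻¹) := by group
    have hVcomm : ∀ x ∈ V, ∀ y ∈ V, x * y = y * x :=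
      fun x hx y hy => (hVmem.mp hx).2.2 y (hVmem.mp hy).1
    have hsq_ne : ∀ x ∈ V, x ≠ 1 → x * x ≠ 1 := by
      intro x hx hx1 hxx
      obtain ⟨-, hxp, -⟩ := hVmem.mp hx
      have h2 : orderOf x ∣ 2 := orderOf_dvd_of_pow_eq_one (by rw [pow_two]; exact hxx)
      have hpd : orderOf x ∣ p := orderOf_dvd_of_pow_eq_one hxp
      have hco : Nat.Coprime 2 p := by
        rw [Nat.prime_two.coprime_iff_not_dvd]
        rw [Nat.odd_iff] at hodd
        omega
      have h1 : orderOf x ∣ 1 := hco ▸ Nat.dvd_gcd h2 hpd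
      exact hx1 (orderOf_eq_one_iff.mp (Nat.dvd_one.mp h1))
    -- a nontrivial element of V
    obtain ⟨v, hvV, hv1⟩ : ∃ v, v ∈ V ∧ v ≠ (1 : G) := by
      haveI : Nontrivial (P : Subgroup G) := by
        apply Finite.one_lt_card_iff_nontrivial.mp
        rw [hcardP]
        exact Nat.one_lt_pow (by omega) hp.one_lt
      haveI : Nontrivial (Subgroup.center ↥(P : Subgroup G)) :=
        IsPGroup.center_nontrivial P.isPGroup'
      obtain ⟨z, hz1⟩ := exists_ne (1 : Subgroup.center ↥(P : Subgroup G))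
      have hz₀1 : (z : ↥(P : Subgroup G)) ≠ 1 := by
        intro h; exact hz1 (Subtype.ext h)
      obtain ⟨k, hk⟩ := P.isPGroup' (z : ↥(P : Subgroup G))
      have hdvd : orderOf (z : ↥(P : Subgroup G)) ∣ p ^ k := orderOf_dvd_of_pow_eq_one hk
      obtain ⟨m, hmk, hord⟩ := (Nat.dvd_prime_pow hp).mp hdvd
      have hm1 : m ≠ 0 := by
        intro h
        rw [h, pow_zero] at hord
        exact hz₀1 (orderOf_eq_one_iff.mp hord)
      set v₀ : ↥(P : Subgroup G) := (z : ↥(P : Subgroup G)) ^ (p ^ (m - 1)) with hv₀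
      have hv₀p : v₀ ^ p = 1 := by
        rw [hv₀, ← pow_mul]
        have he : p ^ (m - 1) * p = p ^ m := by
          rw [← pow_succ]; congr 1; omega
        rw [he, ← hord, pow_orderOf_eq_one]
      have hv₀1 : v₀ ≠ 1 := by
        intro h
        have : orderOf (z : ↥(P : Subgroup G)) ∣ p ^ (m - 1) := orderOf_dvd_of_pow_eq_one h
        rw [hord] at this
        have := Nat.pow_dvd_pow_iff_le_right hp.one_lt |>.mp this
        omega
      have hv₀c : v₀ ∈ Subgroup.center ↥(P : Subgroup G) := by
        rw [hv₀]; exact pow_mem z.2 _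
      refine ⟨(v₀ : G), hVmem.mpr ⟨v₀.2, ?_, ?_⟩, ?_⟩
      · rw [← SubmonoidClass.coe_pow, hv₀p, OneMemClass.coe_one]
      · intro h hh
        have := Subgroup.mem_center_iff.mp hv₀c ⟨h, hh⟩
        have := congrArg Subtype.val this.symm
        simpa using this
      · intro h
        exact hv₀1 (Subtype.ext h)
    -- the eigenvector step
    have key : ∀ a u : G, a * a = 1 → u ∈ V → u ≠ 1 →
        ∃ w, w ∈ V ∧ w ≠ 1 ∧ (a * w * a⁻¹ = w ∨ a * w * a⁻¹ = w⁻¹) ∧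
          (w = u * (a * u * a⁻¹) ∨ w = u * (a * u * a⁻¹)⁻¹) := by
      intro a u ha huV hu1
      set c := a * u * a⁻¹ with hc
      have hcV : c ∈ V := hVconj a u huV
      have hcc : a * c * a⁻¹ = u := by
        have h1 : a * (a * u * a⁻¹) * a⁻¹ = (a * a) * u * (a * a)⁻¹ := by group
        rw [hc, h1, ha, one_mul, inv_one, mul_one]
      have hcu : u * c = c * u := hVcomm u huV c hcV
      by_cases h : u * c = 1
      · refine ⟨u * c⁻¹, mul_mem huV (inv_mem hcV), ?_, Or.inr ?_, Or.inr rfl⟩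
        · have hcinv : c = u⁻¹ := (inv_eq_of_mul_eq_one_right h).symm
          intro hbad
          rw [hcinv, inv_inv] at hbad
          exact hsq_ne u huV hu1 hbad
        · have h1 : a * (u * c⁻¹) * a⁻¹ = (a * u * a⁻¹) * (a * c⁻¹ * a⁻¹) := by group
          have h2 : a * c⁻¹ * a⁻¹ = (a * c * a⁻¹)⁻¹ := by group
          rw [h1, h2, hcc, ← hc, mul_inv_rev, inv_inv]
      · refine ⟨u * c, mul_mem huV hcV, h, Or.inl ?_, Or.inl rfl⟩
        have h1 : a * (u * c) * a⁻¹ = (a * u * a⁻¹) * (a * c * a⁻¹) := by group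
        rw [h1, hcc, ← hc, ← hcu]
    -- two generators of Q and enumeration
    classical
    haveI : Fintype ↥(Q : Subgroup G) := Fintype.ofFinite _
    have hfQ : Fintype.card ↥(Q : Subgroup G) = 4 := by
      rw [← Nat.card_eq_fintype_card, hcardQ]
    haveI : Nontrivial ↥(Q : Subgroup G) := by
      apply Finite.one_lt_card_iff_nontrivial.mp
      rw [hcardQ]; norm_num
    obtain ⟨a₀, ha₀⟩ := exists_ne (1 : ↥(Q : Subgroup G))
    obtain ⟨b₀, hb₀1, hb₀a⟩ : ∃ b₀ : ↥(Q : Subgroup G), b₀ ≠ 1 ∧ b₀ ≠ a₀ := by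
      by_contra hcon
      push_neg at hcon
      have hsub : (Finset.univ : Finset ↥(Q : Subgroup G)) ⊆ {1, a₀} := by
        intro x _
        rcases eq_or_ne x 1 with h | h
        · simp [h]
        · simp [hcon x h]
      have h1 := Finset.card_le_card hsub
      rw [Finset.card_univ, hfQ] at h1
      have h2 : ({1, a₀} : Finset ↥(Q : Subgroup G)).card ≤ 2 :=
        (Finset.card_insert_le _ _).trans (by simp)
      omega
    set a : G := (a₀ : G) with hadef
    set b : G := (b₀ : G) with hbdef
    have haQ : a ∈ (Q : Subgroup G) := a₀.2
    have hbQ : b ∈ (Q : Subgroup G) := b₀.2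
    have ha1 : a ≠ 1 := fun h => ha₀ (Subtype.ext h)
    have hb1 : b ≠ 1 := fun h => hb₀1 (Subtype.ext h)
    have hbnea : b ≠ a := fun h => hb₀a (Subtype.ext h)
    have ha2 : a * a = 1 := hQsq a haQ
    have hb2 : b * b = 1 := hQsq b hbQ
    have hab : a * b = b * a := hQcomm a haQ b hbQ
    have habQ : a * b ∈ (Q : Subgroup G) := mul_mem haQ hbQ
    have hab1 : a * b ≠ 1 := by
      intro h
      have h1 : a = b⁻¹ := eq_inv_of_mul_eq_one_left h
      have h2 : b⁻¹ = b := inv_eq_of_mul_eq_one_right hb2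
      rw [h2] at h1
      exact hbnea h1.symm
    have hQenum : ∀ q ∈ (Q : Subgroup G), q = 1 ∨ q = a ∨ q = b ∨ q = a * b := by
      intro q hq
      have d1 : (1 : ↥(Q : Subgroup G)) ≠ a₀ := Ne.symm ha₀
      have d2 : (1 : ↥(Q : Subgroup G)) ≠ b₀ := Ne.symm hb₀1
      have d3 : (1 : ↥(Q : Subgroup G)) ≠ ⟨a * b, habQ⟩ := by
        intro h; exact hab1 (congrArg Subtype.val h).symm
      have d4 : a₀ ≠ b₀ := Ne.symm hb₀a
      have d5 : a₀ ≠ ⟨a * b, habQ⟩ := by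
        intro h
        have h' : a = a * b := congrArg Subtype.val h
        have h'' : a * 1 = a * b := by rw [mul_one]; exact h'
        exact hb1 (mul_left_cancel h'').symm
      have d6 : b₀ ≠ ⟨a * b, habQ⟩ := by
        intro h
        have h' : b = a * b := congrArg Subtype.val h
        have h'' : 1 * b = a * b := by rw [one_mul]; exact h'
        exact ha1 (mul_right_cancel h'').symm
      set s : Finset ↥(Q : Subgroup G) := {1, a₀, b₀, ⟨a * b, habQ⟩} with hs
      have hcs : s.card = 4 := by
        rw [hs]
        rw [Finset.card_insert_of_notMem (by simp [d1, d2, d3]),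
          Finset.card_insert_of_notMem (by simp [d4, d5]),
          Finset.card_insert_of_notMem (by simp [d6]), Finset.card_singleton]
      have huniv : s = Finset.univ := Finset.eq_univ_of_card s (by rw [hcs, hfQ])
      have hqmem : (⟨q, hq⟩ : ↥(Q : Subgroup G)) ∈ s := by
        rw [huniv]; exact Finset.mem_univ _
      rw [hs] at hqmem
      simp only [Finset.mem_insert, Finset.mem_singleton] at hqmem
      rcases hqmem with h | h | h | h
      · exact Or.inl (congrArg Subtype.val h)
      · exact Or.inr (Or.inl (congrArg Subtype.val h))
      · exact Or.inr (Or.inr (Or.inl (congrArg Subtype.val h)))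
      · exact Or.inr (Or.inr (Or.inr (congrArg Subtype.val h)))
    -- construct the common eigenvector w
    obtain ⟨u, huV, hu1, hua, -⟩ := key a v ha2 hvV hv1
    set d : G := b * u * b⁻¹ with hd
    have hdV : d ∈ V := hVconj b u huV
    have hdinv : b * u⁻¹ * b⁻¹ = d⁻¹ := by rw [hd]; group
    have hda : a * d * a⁻¹ = b * (a * u * a⁻¹) * b⁻¹ := by
      have h1 : a * (b * u * b⁻¹) * a⁻¹ = (a * b) * u * (a * b)⁻¹ := by group
      have h2 : (b * a) * u * (b * a)⁻¹ = b * (a * u * a⁻¹) * b⁻¹ := by group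
      rw [hd, h1, hab, h2]
    obtain ⟨w, hwV, hw1, hwb, hwform⟩ := key b u hb2 huV hu1
    rw [← hd] at hwform
    have hC : Commute u d := hVcomm u huV d hdV
    have hwa : a * w * a⁻¹ = w ∨ a * w * a⁻¹ = w⁻¹ := by
      have hsplit : ∀ x y : G, a * (x * y) * a⁻¹ = (a * x * a⁻¹) * (a * y * a⁻¹) := by
        intro x y; group
      have hinvc : ∀ x : G, a * x⁻¹ * a⁻¹ = (a * x * a⁻¹)⁻¹ := by intro x; group
      rcases hua with h1 | h1
      · have h2 : a * d * a⁻¹ = d := by rw [hda, h1]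
        rcases hwform with h | h
        · left; rw [h, hsplit, h1, h2]
        · left; rw [h, hsplit, hinvc, h1, h2]
      · have h2 : a * d * a⁻¹ = d⁻¹ := by rw [hda, h1, hdinv]
        rcases hwform with h | h
        · right
          rw [h, hsplit, h1, h2]
          exact (hC.inv_left.inv_right).eq.trans (mul_inv_rev u d).symm
        · right
          rw [h, hsplit, hinvc, h1, h2, inv_inv]
          have e : (u * d⁻¹)⁻¹ = d * u⁻¹ := by rw [mul_inv_rev u d⁻¹, inv_inv]
          exact (hC.inv_left.eq).trans e.symm
    -- the normal subgroup N = ⟨w⟩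
    set N : Subgroup G := Subgroup.closure {w} with hN
    have hwP : w ∈ (P : Subgroup G) := (hVmem.mp hwV).1
    have hwp : w ^ p = 1 := (hVmem.mp hwV).2.1
    have hNP : N ≤ (P : Subgroup G) := by
      rw [hN]
      exact (Subgroup.closure_le _).mpr (Set.singleton_subset_iff.mpr hwP)
    have hNV : N ≤ V := by
      rw [hN]
      exact (Subgroup.closure_le _).mpr (Set.singleton_subset_iff.mpr hwV)
    have hwN : w ∈ N := by rw [hN]; exact Subgroup.subset_closure rfl
    have hwinvN : w⁻¹ ∈ N := inv_mem hwN
    have hco2p : Nat.Coprime 2 p := by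
      rw [Nat.prime_two.coprime_iff_not_dvd]
      rw [Nat.odd_iff] at hodd
      omega
    have hQP : (Q : Subgroup G) ⊔ (P : Subgroup G) = ⊤ := by
      set W := (Q : Subgroup G) ⊔ (P : Subgroup G) with hW
      have hd4 : 4 ∣ Nat.card ↥W := by
        rw [← hcardQ]; exact Subgroup.card_dvd_of_le le_sup_left
      have hdp : p ^ (n + 1) ∣ Nat.card ↥W := by
        rw [← hcardP]; exact Subgroup.card_dvd_of_le le_sup_right
      have hco : Nat.Coprime 4 (p ^ (n + 1)) := by
        have h4 : (4 : ℕ) = 2 ^ 2 := by norm_num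
        rw [h4]
        exact Nat.Coprime.pow_left _ (hco2p.pow_right _)
      have hm : 4 * p ^ (n + 1) ∣ Nat.card ↥W := hco.mul_dvd_of_dvd_of_dvd hd4 hdp
      have hle : Nat.card ↥W ∣ Nat.card G := Subgroup.card_subgroup_dvd_card W
      rw [hG] at hle
      exact Subgroup.eq_top_of_card_eq W (by rw [Nat.dvd_antisymm hle hm, hG])
    have hdecomp : ∀ g : G, ∃ q ∈ (Q : Subgroup G), ∃ m ∈ (P : Subgroup G), g = q * m := by
      intro g
      have hg : g ∈ ((Q : Subgroup G) ⊔ (P : Subgroup G) : Subgroup G) := by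
        rw [hQP]; trivial
      have hset : (↑((Q : Subgroup G) ⊔ (P : Subgroup G)) : Set G)
          = (Q : Subgroup G) * (P : Subgroup G) := Subgroup.mul_normal _ _
      have hg' : g ∈ ((Q : Subgroup G) : Set G) * ((P : Subgroup G) : Set G) := by
        rw [← hset]; exact hg
      obtain ⟨q, hq, m, hm, rfl⟩ := hg'
      exact ⟨q, hq, m, hm, rfl⟩
    have hconjw : ∀ g : G, g * w * g⁻¹ ∈ N := by
      intro g
      obtain ⟨q, hq, m, hm, rfl⟩ := hdecomp g
      have hmw : m * w * m⁻¹ = w := by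
        have h1 := (hVmem.mp hwV).2.2 m hm
        rw [← h1, mul_assoc, mul_inv_cancel, mul_one]
      have hqm : (q * m) * w * (q * m)⁻¹ = q * (m * w * m⁻¹) * q⁻¹ := by group
      rw [hqm, hmw]
      have hainv : a * w⁻¹ * a⁻¹ = (a * w * a⁻¹)⁻¹ := by group
      rcases hQenum q hq with h | h | h | h
      · rw [h]; simpa using hwN
      · rw [h]; rcases hwa with h' | h' <;> rw [h']
        · exact hwN
        · exact hwinvN
      · rw [h]; rcases hwb with h' | h' <;> rw [h']
        · exact hwN
        · exact hwinvN
      · rw [h]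
        have h1 : (a * b) * w * (a * b)⁻¹ = a * (b * w * b⁻¹) * a⁻¹ := by group
        rw [h1]
        rcases hwb with h' | h' <;> rw [h']
        · rcases hwa with h'' | h'' <;> rw [h'']
          · exact hwN
          · exact hwinvN
        · rw [hainv]
          rcases hwa with h'' | h'' <;> rw [h'']
          · exact hwinvN
          · rw [inv_inv]; exact hwN
    have hNnormal : N.Normal := by
      constructor
      intro x hx g
      rw [hN] at hx
      obtain ⟨k, rfl⟩ := Subgroup.mem_closure_singleton.mp hx
      have h1 : g * w ^ k * g⁻¹ = (g * w * g⁻¹) ^ k := conj_zpow.symm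
      rw [h1]
      exact zpow_mem (hconjw g) k
    haveI := hNnormal
    have hcardN : Nat.card ↥N = p := by
      rw [hN, ← Subgroup.zpowers_eq_closure, Nat.card_zpowers]
      have h1 : orderOf w ∣ p := orderOf_dvd_of_pow_eq_one hwp
      rcases hp.eq_one_or_self_of_dvd _ h1 with h | h
      · exact absurd (orderOf_eq_one_iff.mp h) hw1
      · exact h
    set f : G →* G ⧸ N := QuotientGroup.mk' N with hfdef
    have hsurj : Function.Surjective f := QuotientGroup.mk'_surjective N
    have hker : f.ker = N := QuotientGroup.ker_mk' N
    have hcardG' : Nat.card (G ⧸ N) = 4 * p ^ n := by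
      have h1 : Nat.card G = Nat.card (G ⧸ N) * Nat.card ↥N :=
        Subgroup.card_eq_card_quotient_mul_card_subgroup N
      rw [hcardN, hG] at h1
      have h2 : 4 * p ^ (n + 1) = (4 * p ^ n) * p := by ring
      rw [h2] at h1
      exact (Nat.eq_of_mul_eq_mul_right hp.pos h1.symm)
    have hP' : ∀ R : Sylow p (G ⧸ N), (R : Subgroup (G ⧸ N)).Normal := by
      have hP₁n : ((P : Subgroup G).map f).Normal := hPn.map f hsurj
      have hiP : (P : Subgroup G).index = 4 := by
        have h1 := Subgroup.card_mul_index (P : Subgroup G)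
        rw [hcardP, hG] at h1
        have hpow : 0 < p ^ (n + 1) := pow_pos hp.pos _
        have h2 : p ^ (n + 1) * (P : Subgroup G).index = p ^ (n + 1) * 4 := by
          rw [h1, mul_comm]
        exact Nat.eq_of_mul_eq_mul_left hpow h2
      have hNle : f.ker ≤ (P : Subgroup G) := by rw [hker]; exact hNP
      have hiP₁ : ((P : Subgroup G).map f).index = 4 := by
        rw [Subgroup.index_map_eq _ hsurj hNle, hiP]
      have hcP₁ : Nat.card ↥((P : Subgroup G).map f) = p ^ n := by
        have h1 := Subgroup.card_mul_index ((P : Subgroup G).map f)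
        rw [hiP₁, hcardG'] at h1
        omega
      have hcP₁' : Nat.card ↥((P : Subgroup G).map f)
          = p ^ (Nat.card (G ⧸ N)).factorization p := by
        rw [hcP₁, hcardG', fact_aux hp hodd]
      haveI : Unique (Sylow p (G ⧸ N)) :=
        Sylow.unique_of_normal (Sylow.ofCard _ hcP₁') hP₁n
      intro R
      have hR : R = Sylow.ofCard _ hcP₁' := Subsingleton.elim _ _
      rw [hR]
      exact hP₁n
    have hQ' : ∀ R : Sylow 2 (G ⧸ N), (∀ x y : (R : Subgroup (G ⧸ N)), x * y = y * x) ∧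
        ∀ x : (R : Subgroup (G ⧸ N)), x ^ 2 = 1 := by
      have hinj : Function.Injective (f.comp (Q : Subgroup G).subtype) := by
        rw [injective_iff_map_eq_one]
        intro x hx
        have hxN : (x : G) ∈ N := by rw [← hker]; exact hx
        have h1 : orderOf (x : G) ∣ p := orderOf_dvd_of_pow_eq_one (hVmem.mp (hNV hxN)).2.1
        have h2 : orderOf (x : G) ∣ 4 := by
          rw [Subgroup.orderOf_coe]
          rw [← hcardQ]
          exact orderOf_dvd_natCard x
        have hco : Nat.Coprime p 4 := by
          have h4 : (4 : ℕ) = 2 ^ 2 := by norm_num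
          rw [h4]
          exact Nat.Coprime.pow_right _ hco2p.symm
        have h3 : orderOf (x : G) ∣ 1 := by
          have := Nat.dvd_gcd h1 h2
          rwa [Nat.Coprime.gcd_eq_one hco] at this
        have h4 : (x : G) = 1 := orderOf_eq_one_iff.mp (Nat.dvd_one.mp h3)
        exact Subtype.ext h4
      have hQ₁eq : (Q : Subgroup G).map f = (f.comp (Q : Subgroup G).subtype).range := by
        rw [MonoidHom.range_comp, Subgroup.range_subtype]
      have hQ₁card : Nat.card ↥((Q : Subgroup G).map f) = 4 := by
        rw [hQ₁eq, ← hcardQ]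
        exact (Nat.card_congr (MonoidHom.ofInjective hinj).toEquiv).symm
      have hQ₁card' : Nat.card ↥((Q : Subgroup G).map f)
          = 2 ^ (Nat.card (G ⧸ N)).factorization 2 := by
        rw [hQ₁card, hcardG', fact_aux2 hp hodd]
        norm_num
      intro R
      obtain ⟨g, hg⟩ := MulAction.exists_smul_eq (G ⧸ N) (Sylow.ofCard _ hQ₁card') R
      have hRmem : ∀ x : (R : Subgroup (G ⧸ N)), ∃ q ∈ (Q : Subgroup G),
          (x : G ⧸ N) = g * f q * g⁻¹ := by
        intro x
        have hx : (x : G ⧸ N) ∈ ((g • Sylow.ofCard _ hQ₁card' : Sylow 2 (G ⧸ N)) :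
            Subgroup (G ⧸ N)) := by
          rw [hg]; exact x.2
        rw [Sylow.coe_subgroup_smul] at hx
        obtain ⟨y, hy, hyx⟩ := (Subgroup.mem_smul_pointwise_iff_exists _ _ _).mp hx
        obtain ⟨q, hqQ, hfq⟩ := Subgroup.mem_map.mp hy
        refine ⟨q, hqQ, ?_⟩
        rw [hfq, ← hyx]
        rfl
      constructor
      · intro x y
        obtain ⟨q, hqQ, hxq⟩ := hRmem x
        obtain ⟨r, hrQ, hyr⟩ := hRmem y
        apply Subtype.ext
        show (x : G ⧸ N) * (y : G ⧸ N) = (y : G ⧸ N) * (x : G ⧸ N)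
        rw [hxq, hyr]
        have hcomm : q * r = r * q := hQcomm q hqQ r hrQ
        calc g * f q * g⁻¹ * (g * f r * g⁻¹) = g * (f q * f r) * g⁻¹ := by group
        _ = g * f (q * r) * g⁻¹ := by rw [map_mul]
        _ = g * f (r * q) * g⁻¹ := by rw [hcomm]
        _ = g * (f r * f q) * g⁻¹ := by rw [map_mul]
        _ = g * f r * g⁻¹ * (g * f q * g⁻¹) := by group
      · intro x
        obtain ⟨q, hqQ, hxq⟩ := hRmem x
        apply Subtype.ext
        show ((x ^ 2 : _) : G ⧸ N) = 1
        rw [SubmonoidClass.coe_pow, hxq]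
        have hq2 : q * q = 1 := hQsq q hqQ
        calc (g * f q * g⁻¹) ^ 2 = g * (f q * f q) * g⁻¹ := by
              rw [pow_two]; group
        _ = g * f (q * q) * g⁻¹ := by rw [map_mul]
        _ = 1 := by rw [hq2, map_one, mul_one, mul_inv_cancel]
    exact isSupersolvable_of_quotient N w hN.symm
      (ih (G ⧸ N) inferInstance inferInstance hcardG' hP' hQ')

/-- Let `p` be an odd prime and `n ≥ 1`, and let `G` be a group of order `4 * p ^ n`
whose Sylow `p`-subgroup is normal and whose Sylow `2`-subgroup is elementary
abelian. Then `G` is supersolvable. -/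
theorem isSupersolvable_of_normal_sylow_and_elementary_abelian
    (p : ℕ) (hp : p.Prime) (hodd : Odd p) (n : ℕ) (hn : 1 ≤ n)
    (G : Type*) [Group G] [Finite G] (hG : Nat.card G = 4 * p ^ n)
    (hP : ∀ P : Sylow p G, (P : Subgroup G).Normal)
    (hQ : ∀ Q : Sylow 2 G, (∀ x y : (Q : Subgroup G), x * y = y * x) ∧
      ∀ x : (Q : Subgroup G), x ^ 2 = 1) :
    IsSupersolvable G :=
  main_aux p hp hodd n G ‹_› ‹_› hG hP hQ
end
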